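/- Let m, d be positive integers, Σ ∈ Mat_{m×d}(ℝ), and let f(x) = B(x)∇H(x) with H(p,q) = ½|p|² + V(q), where (x,y) ↦ B(x)∇H(y) is globally Lipschitz with constant L and f is of class C² with first and second derivatives of at most polynomial growth. Then there exists a function C(x) of at most polynomial growth in |x| such that for every 0 < h with h·L ≤ 1/2 and every x ∈ ℝ^{2m}, the one-step map of the drift-preserving scheme started at x — Y₁ = x + (Σξ,0), Y₂ the unique solution of Y₂ = Y₁ + h B((Y₁+Y₂)/2)∫₀¹∇H(Y₁+θ(Y₂−Y₁))dθ, X₁ = Y₂ + (Ση,0), with ξ, η independent N(0,(h/2)Id_d) vectors — satisfies (E[‖X₁ − x − h f(x) − (Σ(ξ+η), 0) − h·Df(x)((Σξ, 0))‖²])^{1/2} ≤ C(x) h². (Local mean-square expansion of the drift-preserving scheme with remainder of order two, yielding mean-square convergence of order one via Milstein's fundamental theorem.) -/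

import Mathlib

/-!
Write `Y₁ = x + a` with `a = (Σξ, 0)` and `Y₂ - Y₁ = h g`, where `g` is `B` at the midpoint applied
to the average of `∇H` over the segment `[Y₁, Y₂]`. The Lipschitz hypothesis gives
`‖g - f Y₁‖ ≤ (3/2) L ‖Y₂ - Y₁‖`, and since `hL ≤ 1/2` this forces `‖Y₂ - Y₁‖ ≤ 4 h ‖f Y₁‖`, so
`Y₂ = Y₁ + h f(Y₁) + O(L h² ‖f Y₁‖)`. The `η`-terms cancel exactly, and a second order Taylor
expansion of `f(x + a)` leaves a remainder of size `h² P(x) + h Q(x) ‖ξ‖²`: the remainder of the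
expansion is `O(‖a‖²)` for all `a`, by the bound on `D²f` when `‖a‖ ≤ 1` and by the Lipschitz
bound on `f` otherwise. As `E ‖ξ‖⁴ = O(h²)` for `ξ ∼ N(0, (h/2) Id)`, the mean-square norm of
the remainder is `O(h²)`.
-/

open Matrix MeasureTheory ProbabilityTheory
open scoped RealInnerProductSpace

/-- An `ℝᵈ`-valued random vector is centered Gaussian with covariance `s·Id_d`
iff every linear functional `⟨t, ·⟩` of it is a real Gaussian `N(0, s‖t‖²)`. -/
def IsCenteredGaussianVec {Ω : Type*} [MeasurableSpace Ω] (μ : Measure Ω)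
    (d : ℕ) (s : ℝ) (ξ : Ω → EuclideanSpace ℝ (Fin d)) : Prop :=
  Measurable ξ ∧ ∀ t : EuclideanSpace ℝ (Fin d),
    Measure.map (fun ω => ⟪t, ξ ω⟫) μ = gaussianReal 0 (Real.toNNReal (s * ‖t‖ ^ 2))

/-- The vector `(v, 0) ∈ ℝᵐ × ℝᵐ ≅ ℝ^{2m}` whose first `m` components are `v`
and last `m` components vanish. -/
noncomputable def pad (m : ℕ) (v : EuclideanSpace ℝ (Fin m)) :
    EuclideanSpace ℝ (Fin (m + m)) :=
  (WithLp.equiv 2 (Fin (m + m) → ℝ)).symm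
    (Fin.append (WithLp.equiv 2 (Fin m → ℝ) v) 0)

/-- The separable Hamiltonian `H(p,q) = ½ ∑ⱼ pⱼ² + V(q)` on `ℝᵐ × ℝᵐ ≅ ℝ^{2m}`. -/
noncomputable def Ham (m : ℕ) (V : EuclideanSpace ℝ (Fin m) → ℝ)
    (x : EuclideanSpace ℝ (Fin (m + m))) : ℝ :=
  (1 / 2 : ℝ) * ∑ j : Fin m, x (Fin.castAdd m j) ^ 2
    + V ((WithLp.equiv 2 (Fin m → ℝ)).symm fun j => x (Fin.natAdd m j))

/-- The drift `f(x) = B(x) ∇H(x)` of the stochastic Poisson system. -/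
noncomputable def drift (m : ℕ) (V : EuclideanSpace ℝ (Fin m) → ℝ)
    (B : EuclideanSpace ℝ (Fin (m + m)) → Matrix (Fin (m + m)) (Fin (m + m)) ℝ)
    (x : EuclideanSpace ℝ (Fin (m + m))) : EuclideanSpace ℝ (Fin (m + m)) :=
  Matrix.toEuclideanLin (B x) (gradient (Ham m V) x)

open scoped NNReal

lemma integral_pow_gaussianReal_zero (v : ℝ≥0) (n : ℕ) :
    ∫ x, x ^ n ∂gaussianReal 0 v = √(v : ℝ) ^ n * ∫ x, x ^ n ∂gaussianReal 0 1 := by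
  have hmap : (gaussianReal 0 1).map (√(v : ℝ) * ·) = gaussianReal 0 v := by
    rw [gaussianReal_map_const_mul, mul_zero, mul_one]
    congr 1
    exact NNReal.eq (Real.sq_sqrt v.2)
  rw [← hmap, integral_map (by fun_prop) (by fun_prop), ← integral_const_mul]
  simp_rw [mul_pow]

lemma integrable_pow_gaussianReal (μ : ℝ) (v : ℝ≥0) (n : ℕ) :
    Integrable (fun x => x ^ n) (gaussianReal μ v) :=
  integrable_pow_of_mem_interior_integrableExpSet (by simp) n

lemma IsCenteredGaussianVec.map_apply {Ω : Type*} [MeasurableSpace Ω] {μ : Measure Ω} {d : ℕ}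
    {s : ℝ} {ξ : Ω → EuclideanSpace ℝ (Fin d)} (hξ : IsCenteredGaussianVec μ d s ξ)
    (i : Fin d) : μ.map (fun ω => ξ ω i) = gaussianReal 0 s.toNNReal := by
  simpa [EuclideanSpace.inner_single_left] using hξ.2 (EuclideanSpace.single i 1)

lemma IsCenteredGaussianVec.measurable_apply {Ω : Type*} [MeasurableSpace Ω] {μ : Measure Ω}
    {d : ℕ} {s : ℝ} {ξ : Ω → EuclideanSpace ℝ (Fin d)} (hξ : IsCenteredGaussianVec μ d s ξ)
    (i : Fin d) : Measurable fun ω => ξ ω i :=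
  (measurable_pi_apply i).comp ((WithLp.measurable_ofLp _ _).comp hξ.1)

lemma IsCenteredGaussianVec.integrable_apply_pow {Ω : Type*} [MeasurableSpace Ω]
    {μ : Measure Ω} {d : ℕ} {s : ℝ} {ξ : Ω → EuclideanSpace ℝ (Fin d)}
    (hξ : IsCenteredGaussianVec μ d s ξ) (i : Fin d) (n : ℕ) :
    Integrable (fun ω => ξ ω i ^ n) μ := by
  have : Integrable (fun x : ℝ => x ^ n) (μ.map fun ω => ξ ω i) := by
    rw [hξ.map_apply]
    exact integrable_pow_gaussianReal 0 _ n
  exact this.comp_measurable (hξ.measurable_apply i)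

lemma IsCenteredGaussianVec.integral_apply_pow {Ω : Type*} [MeasurableSpace Ω]
    {μ : Measure Ω} {d : ℕ} {s : ℝ} {ξ : Ω → EuclideanSpace ℝ (Fin d)}
    (hξ : IsCenteredGaussianVec μ d s ξ) (hs : 0 ≤ s) (i : Fin d) (n : ℕ) :
    ∫ ω, ξ ω i ^ n ∂μ = √s ^ n * ∫ x, x ^ n ∂gaussianReal 0 1 := by
  rw [← Real.coe_toNNReal _ hs, ← integral_pow_gaussianReal_zero, ← hξ.map_apply,
    integral_map (hξ.measurable_apply i).aemeasurable (by fun_prop)]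

lemma norm_pow_four_le_card_mul_sum {d : ℕ} (v : EuclideanSpace ℝ (Fin d)) :
    ‖v‖ ^ 4 ≤ d * ∑ i, v i ^ 4 := by
  calc ‖v‖ ^ 4 = (∑ i, v i ^ 2) ^ 2 := by rw [← EuclideanSpace.real_norm_sq_eq]; ring
    _ ≤ d * ∑ i, (v i ^ 2) ^ 2 := by
        simpa using sq_sum_le_card_mul_sum_sq (s := Finset.univ) (f := fun i => v i ^ 2)
    _ = d * ∑ i, v i ^ 4 := by simp_rw [← pow_mul]

lemma IsCenteredGaussianVec.integrable_norm_pow_four {Ω : Type*} [MeasurableSpace Ω]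
    {μ : Measure Ω} {d : ℕ} {s : ℝ} {ξ : Ω → EuclideanSpace ℝ (Fin d)}
    (hξ : IsCenteredGaussianVec μ d s ξ) : Integrable (fun ω => ‖ξ ω‖ ^ 4) μ := by
  refine Integrable.mono'
    ((integrable_finsetSum Finset.univ fun i _ => hξ.integrable_apply_pow i 4).const_mul d)
    (hξ.1.norm.pow_const 4).aestronglyMeasurable (ae_of_all _ fun ω => ?_)
  simpa using norm_pow_four_le_card_mul_sum (ξ ω)

lemma IsCenteredGaussianVec.integral_norm_pow_four_le {Ω : Type*} [MeasurableSpace Ω]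
    {μ : Measure Ω} {d : ℕ} {s : ℝ} {ξ : Ω → EuclideanSpace ℝ (Fin d)}
    (hξ : IsCenteredGaussianVec μ d s ξ) (hs : 0 ≤ s) :
    ∫ ω, ‖ξ ω‖ ^ 4 ∂μ ≤ (d * s) ^ 2 * ∫ x, x ^ 4 ∂gaussianReal 0 1 := by
  have hint i := hξ.integrable_apply_pow i 4
  have hs4 : √s ^ 4 = s ^ 2 := by rw [show 4 = 2 * 2 by rfl, pow_mul, Real.sq_sqrt hs]
  calc ∫ ω, ‖ξ ω‖ ^ 4 ∂μ ≤ ∫ ω, d * ∑ i, ξ ω i ^ 4 ∂μ :=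
        integral_mono hξ.integrable_norm_pow_four
          ((integrable_finsetSum _ fun i _ => hint i).const_mul _)
          fun ω => norm_pow_four_le_card_mul_sum (ξ ω)
    _ = (d * s) ^ 2 * ∫ x, x ^ 4 ∂gaussianReal 0 1 := by
        simp [integral_const_mul, integral_finsetSum _ fun i _ => hint i,
          hξ.integral_apply_pow hs, hs4]
        ring

section Taylor

variable {E F : Type*} [NormedAddCommGroup E] [NormedSpace ℝ E]
  [NormedAddCommGroup F] [NormedSpace ℝ F] {f : E → F}

theorem norm_image_sub_sub_fderiv_le (hf : ContDiff ℝ 2 f) {x y : E} {M : ℝ}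
    (hM : ∀ z ∈ Metric.closedBall x ‖y - x‖, ‖iteratedFDeriv ℝ 2 f z‖ ≤ M) :
    ‖f y - f x - fderiv ℝ f x (y - x)‖ ≤ M * ‖y - x‖ ^ 2 := by
  set r := ‖y - x‖
  have hx : x ∈ Metric.closedBall x r := Metric.mem_closedBall_self (norm_nonneg _)
  have hy : y ∈ Metric.closedBall x r := by rw [Metric.mem_closedBall, dist_eq_norm]
  have hM0 : 0 ≤ M := (norm_nonneg _).trans (hM x hx)
  have hdiff : Differentiable ℝ f := hf.differentiable (by norm_num)
  have hdiff' : Differentiable ℝ (fderiv ℝ f) :=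
    (hf.fderiv_right (m := 1) (by norm_num)).differentiable (by norm_num)
  have hf' : ∀ z ∈ Metric.closedBall x r, ‖fderiv ℝ f z - fderiv ℝ f x‖ ≤ M * r := by
    intro z hz
    have hf'' : ∀ w ∈ Metric.closedBall x r, ‖fderiv ℝ (fderiv ℝ f) w‖ ≤ M := fun w hw => by
      rw [← norm_iteratedFDeriv_one (𝕜 := ℝ), norm_iteratedFDeriv_fderiv]
      exact hM w hw
    exact ((convex_closedBall x r).norm_image_sub_le_of_norm_fderiv_le
      (fun w _ => hdiff'.differentiableAt) hf'' hx hz).trans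
      (mul_le_mul_of_nonneg_left (by rwa [← dist_eq_norm]) hM0)
  calc ‖f y - f x - fderiv ℝ f x (y - x)‖ ≤ M * r * r :=
        (convex_closedBall x r).norm_image_sub_le_of_norm_fderiv_le'
          (fun w _ => hdiff.differentiableAt) hf' hx hy
    _ = M * r ^ 2 := by ring

theorem norm_image_sub_sub_fderiv_le_sq (hf : ContDiff ℝ 2 f) {Λ : ℝ≥0}
    (hlip : LipschitzWith Λ f) {K : ℝ} {k : ℕ}
    (hK : ∀ z, ‖iteratedFDeriv ℝ 2 f z‖ ≤ K * (1 + ‖z‖) ^ k) (x y : E) :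
    ‖f y - f x - fderiv ℝ f x (y - x)‖ ≤ (K * (2 + ‖x‖) ^ k + 2 * Λ) * ‖y - x‖ ^ 2 := by
  have hK0 : 0 ≤ K :=
    nonneg_of_mul_nonneg_left ((norm_nonneg _).trans (hK 0)) (by positivity)
  rcases le_or_gt ‖y - x‖ 1 with hyx | hyx
  · refine (norm_image_sub_sub_fderiv_le hf fun z hz => (hK z).trans ?_).trans
      (mul_le_mul_of_nonneg_right (le_add_of_nonneg_right (by positivity)) (by positivity))
    have : ‖z‖ ≤ ‖x‖ + 1 := by
      have := norm_le_norm_add_norm_sub' z x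
      rw [Metric.mem_closedBall, dist_eq_norm] at hz
      linarith
    gcongr 2
    linarith
  · calc ‖f y - f x - fderiv ℝ f x (y - x)‖
        ≤ ‖f y - f x‖ + ‖fderiv ℝ f x‖ * ‖y - x‖ :=
          (norm_sub_le _ _).trans (add_le_add_right ((fderiv ℝ f x).le_opNorm _) _)
      _ ≤ Λ * ‖y - x‖ + Λ * ‖y - x‖ := by
          gcongr
          · exact hlip.norm_sub_le y x
          · exact norm_fderiv_le_of_lipschitz ℝ hlip
      _ ≤ (K * (2 + ‖x‖) ^ k + 2 * Λ) * ‖y - x‖ ^ 2 := by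
          have : 0 ≤ K * (2 + ‖x‖) ^ k := by positivity
          have : ‖y - x‖ ≤ ‖y - x‖ ^ 2 := by nlinarith
          nlinarith [Λ.2, norm_nonneg (y - x)]

end Taylor

theorem sqrt_integral_norm_sq_le {Ω F : Type*} [MeasurableSpace Ω] {μ : Measure Ω}
    [IsProbabilityMeasure μ] [NormedAddCommGroup F] {R : Ω → F} {Z : Ω → ℝ} {a b M : ℝ}
    (ha : 0 ≤ a) (hb : 0 ≤ b) (hM : 0 ≤ M) (hZ : Integrable (fun ω => Z ω ^ 2) μ)
    (hZM : ∫ ω, Z ω ^ 2 ∂μ ≤ M ^ 2) (hR : ∀ᵐ ω ∂μ, ‖R ω‖ ≤ a + b * Z ω) :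
    √(∫ ω, ‖R ω‖ ^ 2 ∂μ) ≤ √2 * (a + b * M) := by
  have hdom : Integrable (fun ω => 2 * a ^ 2 + 2 * b ^ 2 * Z ω ^ 2) μ :=
    (integrable_const _).add (hZ.const_mul _)
  have hRsq : ∀ᵐ ω ∂μ, ‖R ω‖ ^ 2 ≤ 2 * a ^ 2 + 2 * b ^ 2 * Z ω ^ 2 := by
    filter_upwards [hR] with ω hω
    nlinarith [norm_nonneg (R ω), sq_nonneg (a - b * Z ω)]
  have hint : ∫ ω, ‖R ω‖ ^ 2 ∂μ ≤ (√2 * (a + b * M)) ^ 2 :=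
    calc ∫ ω, ‖R ω‖ ^ 2 ∂μ ≤ ∫ ω, 2 * a ^ 2 + 2 * b ^ 2 * Z ω ^ 2 ∂μ :=
          integral_mono_of_nonneg (ae_of_all _ fun ω => by positivity) hdom hRsq
      _ = 2 * a ^ 2 + 2 * b ^ 2 * ∫ ω, Z ω ^ 2 ∂μ := by
          rw [integral_add (integrable_const _) (hZ.const_mul _), integral_const,
            integral_const_mul, probReal_univ, one_smul]
      _ ≤ 2 * a ^ 2 + 2 * b ^ 2 * M ^ 2 := by gcongr
      _ ≤ (√2 * (a + b * M)) ^ 2 := by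
          rw [mul_pow, Real.sq_sqrt zero_le_two]
          nlinarith [mul_nonneg (mul_nonneg ha hb) hM]
  exact (Real.sqrt_le_left (by positivity)).mpr hint

theorem add_mul_add_mul_pow_le {α β γ t : ℝ} (hα : 0 ≤ α) (hβ : 0 ≤ β) (hγ : 0 ≤ γ)
    (ht : 0 ≤ t) (k : ℕ) :
    α + β * t + γ * (2 + t) ^ k ≤ (α + β + 2 ^ k * γ) * (1 + t) ^ (k + 1) := by
  have h1 : 1 ≤ (1 + t) ^ (k + 1) := one_le_pow₀ (by linarith)
  have ht1 : t ≤ (1 + t) ^ (k + 1) := by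
    calc t ≤ 1 + t := by linarith
      _ = (1 + t) ^ 1 := (pow_one _).symm
      _ ≤ (1 + t) ^ (k + 1) := pow_le_pow_right₀ (by linarith) (by omega)
  have h2 : (2 + t) ^ k ≤ 2 ^ k * (1 + t) ^ (k + 1) :=
    calc (2 + t) ^ k ≤ (2 * (1 + t)) ^ k := by gcongr; linarith
      _ = 2 ^ k * (1 + t) ^ k := mul_pow _ _ _
      _ ≤ 2 ^ k * (1 + t) ^ (k + 1) := by gcongr; linarith; omega
  nlinarith [mul_le_mul_of_nonneg_left h2 hγ, mul_le_mul_of_nonneg_left ht1 hβ]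

theorem le_toNNReal_mul_add_of_le_mul_sqrt {a p q L : ℝ} (hp : 0 ≤ p) (hq : 0 ≤ q)
    (h : a ≤ L * √(p ^ 2 + q ^ 2)) : a ≤ L.toNNReal * (p + q) := by
  refine h.trans (mul_le_mul L.le_coe_toNNReal ?_ (Real.sqrt_nonneg _) (L.toNNReal.2))
  rw [Real.sqrt_le_left (by positivity)]
  nlinarith [mul_nonneg hp hq]

theorem mul_toNNReal_le {h L c : ℝ} (hh : 0 ≤ h) (hc : 0 ≤ c) (hhL : h * L ≤ c) :
    h * L.toNNReal ≤ c := by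
  rw [Real.coe_toNNReal', mul_max_of_nonneg _ _ hh, mul_zero]
  exact max_le hhL hc

section MidpointStep

variable {E : Type*} [NormedAddCommGroup E] [NormedSpace ℝ E]
  {A : E → E →L[ℝ] E} {G : E → E} {L : ℝ≥0}

theorem lipschitzWith_apply_apply
    (hA : ∀ u v u' v', ‖A u (G v) - A u' (G v')‖ ≤ L * (‖u - u'‖ + ‖v - v'‖)) :
    LipschitzWith (2 * L) fun z => A z (G z) :=
  LipschitzWith.of_dist_le_mul fun y z => by
    rw [dist_eq_norm, dist_eq_norm]
    push_cast
    linarith [hA y y z z]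

theorem norm_apply_integral_sub_le [CompleteSpace E] (hG : Continuous G)
    (hA : ∀ u v u' v', ‖A u (G v) - A u' (G v')‖ ≤ L * (‖u - u'‖ + ‖v - v'‖)) (u y Δ : E) :
    ‖A u (∫ θ in (0 : ℝ)..1, G (y + θ • Δ)) - A y (G y)‖ ≤ L * (‖u - y‖ + ‖Δ‖) := by
  have hcont : Continuous fun θ : ℝ => G (y + θ • Δ) := hG.comp (by fun_prop)
  have hint := hcont.intervalIntegrable (μ := MeasureTheory.volume) 0 1
  have hsub : A u (∫ θ in (0 : ℝ)..1, G (y + θ • Δ)) - A y (G y)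
      = ∫ θ in (0 : ℝ)..1, (A u (G (y + θ • Δ)) - A y (G y)) := by
    have hint' : IntervalIntegrable (fun θ : ℝ => A u (G (y + θ • Δ))) MeasureTheory.volume 0 1 :=
      ((A u).continuous.comp hcont).intervalIntegrable _ _
    rw [intervalIntegral.integral_sub hint' intervalIntegrable_const,
      (A u).intervalIntegral_comp_comm hint]
    simp
  rw [hsub]
  refine (intervalIntegral.norm_integral_le_of_norm_le_const
    (C := L * (‖u - y‖ + ‖Δ‖)) fun θ hθ => ?_).trans (by simp)
  rw [Set.uIoc_of_le zero_le_one] at hθ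
  refine (hA u _ y y).trans (mul_le_mul_of_nonneg_left ?_ L.2)
  rw [add_sub_cancel_left, norm_smul, Real.norm_of_nonneg hθ.1.le]
  gcongr
  exact mul_le_of_le_one_left (norm_nonneg _) hθ.2

theorem norm_midpoint_step_sub_le [CompleteSpace E] (hG : Continuous G)
    (hA : ∀ u v u' v', ‖A u (G v) - A u' (G v')‖ ≤ L * (‖u - u'‖ + ‖v - v'‖))
    {h : ℝ} (hh : 0 ≤ h) (hhL : h * L ≤ 1 / 2) {Y₁ Y : E}
    (hY : Y = Y₁ + h • A ((2 : ℝ)⁻¹ • (Y₁ + Y)) (∫ θ in (0 : ℝ)..1, G (Y₁ + θ • (Y - Y₁)))) :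
    ‖Y - Y₁ - h • A Y₁ (G Y₁)‖ ≤ 6 * L * h ^ 2 * ‖A Y₁ (G Y₁)‖ := by
  set g := A ((2 : ℝ)⁻¹ • (Y₁ + Y)) (∫ θ in (0 : ℝ)..1, G (Y₁ + θ • (Y - Y₁)))
  set f₁ := A Y₁ (G Y₁)
  have hstep : Y - Y₁ = h • g := by rw [hY]; abel
  have hmid : (2 : ℝ)⁻¹ • (Y₁ + Y) - Y₁ = (2 : ℝ)⁻¹ • (Y - Y₁) := by module
  have hgf : ‖g - f₁‖ ≤ 3 / 2 * L * (h * ‖g‖) := by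
    refine (norm_apply_integral_sub_le hG hA _ _ _).trans (le_of_eq ?_)
    rw [hmid, hstep, norm_smul, norm_smul, Real.norm_of_nonneg hh]
    norm_num
    ring
  have hg : h * ‖g‖ ≤ 4 * h * ‖f₁‖ := by
    have h1 := mul_le_mul_of_nonneg_left (norm_le_norm_add_norm_sub' g f₁) hh
    have h2 := mul_le_mul_of_nonneg_left hgf hh
    have h3 := mul_le_mul_of_nonneg_right hhL (by positivity : 0 ≤ h * ‖g‖)
    nlinarith
  calc ‖Y - Y₁ - h • f₁‖ = h * ‖g - f₁‖ := by
        rw [hstep, ← smul_sub, norm_smul, Real.norm_of_nonneg hh]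
    _ ≤ h * (3 / 2 * L * (4 * h * ‖f₁‖)) := by gcongr; exact hgf.trans (by gcongr)
    _ = 6 * L * h ^ 2 * ‖f₁‖ := by ring

theorem norm_midpoint_step_remainder_le [CompleteSpace E] (hG : Continuous G)
    (hA : ∀ u v u' v', ‖A u (G v) - A u' (G v')‖ ≤ L * (‖u - u'‖ + ‖v - v'‖))
    (hf : ContDiff ℝ 2 fun z => A z (G z)) {K : ℝ} {k : ℕ}
    (hK : ∀ z, ‖iteratedFDeriv ℝ 2 (fun z => A z (G z)) z‖ ≤ K * (1 + ‖z‖) ^ k)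
    {h : ℝ} (hh : 0 ≤ h) (hhL : h * L ≤ 1 / 2) {x a Y : E}
    (hY : Y = (x + a) + h • A ((2 : ℝ)⁻¹ • ((x + a) + Y))
      (∫ θ in (0 : ℝ)..1, G ((x + a) + θ • (Y - (x + a))))) :
    ‖Y - (x + a) - h • A x (G x) - h • fderiv ℝ (fun z => A z (G z)) x a‖
      ≤ h ^ 2 * (6 * L * ‖A x (G x)‖ + 6 * L ^ 2) + h * (K * (2 + ‖x‖) ^ k + 7 * L) * ‖a‖ ^ 2 := by
  set f := fun z => A z (G z)
  have hlip := lipschitzWith_apply_apply hA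
  have hstep := norm_midpoint_step_sub_le hG hA hh hhL hY
  have hdrift : ‖f (x + a)‖ ≤ ‖f x‖ + 2 * L * ‖a‖ := by
    have := hlip.norm_sub_le (x + a) x
    rw [add_sub_cancel_left] at this
    push_cast at this
    linarith [norm_le_norm_add_norm_sub' (f (x + a)) (f x)]
  have htaylor := norm_image_sub_sub_fderiv_le_sq hf hlip hK x (x + a)
  rw [add_sub_cancel_left] at htaylor
  push_cast at htaylor
  have hsplit : Y - (x + a) - h • f x - h • fderiv ℝ f x a
      = (Y - (x + a) - h • f (x + a)) + h • (f (x + a) - f x - fderiv ℝ f x a) := by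
    rw [smul_sub, smul_sub]; abel
  -- AM-GM: `12 L² h² ‖a‖ ≤ 6 L² h² + 6 L² h² ‖a‖²`, and `6 L² h² ≤ 3 L h` since `h L ≤ 1/2`
  have hcross : 12 * L ^ 2 * h ^ 2 * ‖a‖ ≤ 6 * L ^ 2 * h ^ 2 + 3 * L * h * ‖a‖ ^ 2 := by
    have h1 : 0 ≤ 6 * L ^ 2 * h ^ 2 * (‖a‖ - 1) ^ 2 := by positivity
    have h2 := mul_le_mul_of_nonneg_left hhL (by positivity : (0 : ℝ) ≤ 6 * L * h * ‖a‖ ^ 2)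
    nlinarith
  calc ‖Y - (x + a) - h • f x - h • fderiv ℝ f x a‖
      ≤ 6 * L * h ^ 2 * ‖f (x + a)‖ + h * ((K * (2 + ‖x‖) ^ k + 2 * (2 * L)) * ‖a‖ ^ 2) := by
        rw [hsplit]
        refine (norm_add_le _ _).trans (add_le_add hstep ?_)
        rw [norm_smul, Real.norm_of_nonneg hh]
        exact mul_le_mul_of_nonneg_left htaylor hh
    _ ≤ 6 * L * h ^ 2 * (‖f x‖ + 2 * L * ‖a‖)
        + h * ((K * (2 + ‖x‖) ^ k + 2 * (2 * L)) * ‖a‖ ^ 2) := by gcongr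
    _ ≤ h ^ 2 * (6 * L * ‖f x‖ + 6 * L ^ 2) + h * (K * (2 + ‖x‖) ^ k + 7 * L) * ‖a‖ ^ 2 := by
        nlinarith [hcross]

theorem abs_remainder_coefficient_le
    (hA : ∀ u v u' v', ‖A u (G v) - A u' (G v')‖ ≤ L * (‖u - u'‖ + ‖v - v'‖))
    {K s : ℝ} (hK : 0 ≤ K) (hs : 0 ≤ s) (k : ℕ) (x : E) :
    |√2 * (6 * L * ‖A x (G x)‖ + 6 * L ^ 2 + (K * (2 + ‖x‖) ^ k + 7 * L) * s)|
      ≤ √2 * (6 * L * ‖A 0 (G 0)‖ + 6 * L ^ 2 + 7 * L * s + 12 * L ^ 2 + 2 ^ k * (K * s))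
        * (1 + ‖x‖) ^ (k + 1) := by
  have hfx : ‖A x (G x)‖ ≤ ‖A 0 (G 0)‖ + 2 * L * ‖x‖ := by
    have hlip := (lipschitzWith_apply_apply hA).norm_sub_le x 0
    push_cast at hlip
    rw [sub_zero] at hlip
    linarith [norm_le_norm_add_norm_sub' (A x (G x)) (A 0 (G 0))]
  rw [abs_of_nonneg (by positivity)]
  calc √2 * (6 * L * ‖A x (G x)‖ + 6 * L ^ 2 + (K * (2 + ‖x‖) ^ k + 7 * L) * s)
      ≤ √2 * (6 * L * (‖A 0 (G 0)‖ + 2 * L * ‖x‖) + 6 * L ^ 2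
          + (K * (2 + ‖x‖) ^ k + 7 * L) * s) := by
        gcongr
    _ = √2 * (6 * L * ‖A 0 (G 0)‖ + 6 * L ^ 2 + 7 * L * s) + √2 * (12 * L ^ 2) * ‖x‖
        + √2 * (K * s) * (2 + ‖x‖) ^ k := by ring
    _ ≤ _ := (add_mul_add_mul_pow_le (by positivity) (by positivity) (by positivity)
          (norm_nonneg x) k).trans_eq (by ring)

end MidpointStep

theorem pad_add (m : ℕ) (v w : EuclideanSpace ℝ (Fin m)) :
    pad m (v + w) = pad m v + pad m w := by
  ext i
  induction i using Fin.addCases <;> simp [pad, -Fin.natAdd_eq_addNat]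

theorem norm_pad (m : ℕ) (v : EuclideanSpace ℝ (Fin m)) : ‖pad m v‖ = ‖v‖ := by
  rw [← sq_eq_sq₀ (norm_nonneg _) (norm_nonneg _), EuclideanSpace.real_norm_sq_eq,
    EuclideanSpace.real_norm_sq_eq, Fin.sum_univ_add]
  simp [pad, -Fin.natAdd_eq_addNat]

theorem continuous_gradient_Ham (m : ℕ) {V : EuclideanSpace ℝ (Fin m) → ℝ}
    (hV : ContDiff ℝ 1 V) : Continuous (gradient (Ham m V)) := by
  have hH : ContDiff ℝ 1 (Ham m V) := by
    unfold Ham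
    fun_prop
  exact (InnerProductSpace.toDual ℝ _).symm.continuous.comp (hH.continuous_fderiv one_ne_zero)

section DriftPreserving

variable {m d : ℕ} {Sig : Matrix (Fin m) (Fin d) ℝ}
  {B : EuclideanSpace ℝ (Fin (m + m)) → Matrix (Fin (m + m)) (Fin (m + m)) ℝ}
  {V : EuclideanSpace ℝ (Fin m) → ℝ} {ℓ : ℝ≥0} {K : ℝ} {k : ℕ} {h : ℝ}

theorem norm_drift_preserving_remainder_le (hV : ContDiff ℝ 1 V)
    (hA : ∀ u v u' v' : EuclideanSpace ℝ (Fin (m + m)),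
      ‖Matrix.toEuclideanLin (B u) (gradient (Ham m V) v)
          - Matrix.toEuclideanLin (B u') (gradient (Ham m V) v')‖ ≤ ℓ * (‖u - u'‖ + ‖v - v'‖))
    (hf : ContDiff ℝ 2 (drift m V B))
    (hK : ∀ z, ‖iteratedFDeriv ℝ 2 (drift m V B) z‖ ≤ K * (1 + ‖z‖) ^ k) (hK0 : 0 ≤ K)
    (hh : 0 ≤ h) (hhℓ : h * ℓ ≤ 1 / 2) {x Y : EuclideanSpace ℝ (Fin (m + m))}
    {u v : EuclideanSpace ℝ (Fin d)}
    (hY : Y = (x + pad m (Matrix.toEuclideanLin Sig u))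
      + h • (Matrix.toEuclideanLin
          (B ((2 : ℝ)⁻¹ • ((x + pad m (Matrix.toEuclideanLin Sig u)) + Y))))
        (∫ θ in (0 : ℝ)..1, gradient (Ham m V)
          ((x + pad m (Matrix.toEuclideanLin Sig u))
            + θ • (Y - (x + pad m (Matrix.toEuclideanLin Sig u)))))) :
    ‖(Y + pad m (Matrix.toEuclideanLin Sig v)) - x - h • drift m V B x
        - pad m (Matrix.toEuclideanLin Sig (u + v))
        - h • (fderiv ℝ (drift m V B) x) (pad m (Matrix.toEuclideanLin Sig u))‖
      ≤ h ^ 2 * (6 * ℓ * ‖drift m V B x‖ + 6 * ℓ ^ 2) + h * (K * (2 + ‖x‖) ^ k + 7 * ℓ)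
        * ‖(Matrix.toEuclideanLin Sig).toContinuousLinearMap‖ ^ 2 * ‖u‖ ^ 2 := by
  set a := pad m (Matrix.toEuclideanLin Sig u)
  have ha : ‖a‖ ≤ ‖(Matrix.toEuclideanLin Sig).toContinuousLinearMap‖ * ‖u‖ :=
    (norm_pad _ _).trans_le ((Matrix.toEuclideanLin Sig).toContinuousLinearMap.le_opNorm _)
  calc _ = ‖Y - (x + a) - h • drift m V B x - h • (fderiv ℝ (drift m V B) x) a‖ := by
        rw [map_add, pad_add]; congr 1; abel
    _ ≤ h ^ 2 * (6 * ℓ * ‖drift m V B x‖ + 6 * ℓ ^ 2) + h * (K * (2 + ‖x‖) ^ k + 7 * ℓ) * ‖a‖ ^ 2 :=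
      norm_midpoint_step_remainder_le
        (A := fun u => (Matrix.toEuclideanLin (B u)).toContinuousLinearMap)
        (continuous_gradient_Ham m hV) hA hf hK hh hhℓ hY
    _ ≤ _ := by
      rw [mul_assoc _ (_ ^ 2), ← mul_pow]
      gcongr

theorem sqrt_integral_norm_sq_drift_preserving_remainder_le (hV : ContDiff ℝ 1 V)
    (hA : ∀ u v u' v' : EuclideanSpace ℝ (Fin (m + m)),
      ‖Matrix.toEuclideanLin (B u) (gradient (Ham m V) v)
          - Matrix.toEuclideanLin (B u') (gradient (Ham m V) v')‖ ≤ ℓ * (‖u - u'‖ + ‖v - v'‖))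
    (hf : ContDiff ℝ 2 (drift m V B))
    (hK : ∀ z, ‖iteratedFDeriv ℝ 2 (drift m V B) z‖ ≤ K * (1 + ‖z‖) ^ k) (hK0 : 0 ≤ K)
    (hh : 0 ≤ h) (hhℓ : h * ℓ ≤ 1 / 2) (x : EuclideanSpace ℝ (Fin (m + m)))
    {Ω : Type*} [MeasurableSpace Ω] {μ : Measure Ω} [IsProbabilityMeasure μ]
    {ξ η : Ω → EuclideanSpace ℝ (Fin d)} (hξ : IsCenteredGaussianVec μ d (h / 2) ξ)
    {Y₂ : Ω → EuclideanSpace ℝ (Fin (m + m))}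
    (hY₂ : ∀ᵐ ω ∂μ,
      Y₂ ω = (x + pad m (Matrix.toEuclideanLin Sig (ξ ω)))
        + h • (Matrix.toEuclideanLin
            (B ((2 : ℝ)⁻¹ • ((x + pad m (Matrix.toEuclideanLin Sig (ξ ω))) + Y₂ ω))))
          (∫ θ in (0 : ℝ)..1, gradient (Ham m V)
            ((x + pad m (Matrix.toEuclideanLin Sig (ξ ω)))
              + θ • (Y₂ ω - (x + pad m (Matrix.toEuclideanLin Sig (ξ ω))))))) :
    √(∫ ω, ‖(Y₂ ω + pad m (Matrix.toEuclideanLin Sig (η ω))) - x - h • drift m V B x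
        - pad m (Matrix.toEuclideanLin Sig (ξ ω + η ω))
        - h • (fderiv ℝ (drift m V B) x) (pad m (Matrix.toEuclideanLin Sig (ξ ω)))‖ ^ 2 ∂μ)
      ≤ √2 * (6 * ℓ * ‖drift m V B x‖ + 6 * ℓ ^ 2 + (K * (2 + ‖x‖) ^ k + 7 * ℓ)
          * (‖(Matrix.toEuclideanLin Sig).toContinuousLinearMap‖ ^ 2
            * (d * √(∫ x, x ^ 4 ∂gaussianReal 0 1) / 2))) * h ^ 2 := by
  have hM₄ : 0 ≤ ∫ x, x ^ 4 ∂gaussianReal 0 1 :=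
    integral_nonneg fun x => (even_two_mul 2).pow_nonneg x
  have hZM : ∫ ω, (‖ξ ω‖ ^ 2) ^ 2 ∂μ ≤ (d * (h / 2) * √(∫ x, x ^ 4 ∂gaussianReal 0 1)) ^ 2 := by
    simp_rw [← pow_mul]
    refine (hξ.integral_norm_pow_four_le (by positivity)).trans_eq ?_
    rw [mul_pow _ √_, Real.sq_sqrt hM₄]
  refine (sqrt_integral_norm_sq_le (by positivity) (by positivity) (by positivity)
    (by simpa only [← pow_mul] using hξ.integrable_norm_pow_four) hZM
    (hY₂.mono fun ω hω => norm_drift_preserving_remainder_le hV hA hf hK hK0 hh hhℓ hω)).trans_eq ?_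
  ring

end DriftPreserving

theorem drift_preserving_one_step_mean_square_expansion_general
    (m d : ℕ)
    (Sig : Matrix (Fin m) (Fin d) ℝ)
    (B : EuclideanSpace ℝ (Fin (m + m)) → Matrix (Fin (m + m)) (Fin (m + m)) ℝ)
    (V : EuclideanSpace ℝ (Fin m) → ℝ) (hV : ContDiff ℝ 1 V)
    (L : ℝ)
    (hLip : ∀ x y x' y' : EuclideanSpace ℝ (Fin (m + m)),
      ‖Matrix.toEuclideanLin (B x) (gradient (Ham m V) y)
          - Matrix.toEuclideanLin (B x') (gradient (Ham m V) y')‖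
        ≤ L * Real.sqrt (‖x - x'‖ ^ 2 + ‖y - y'‖ ^ 2))
    (hf : ContDiff ℝ 2 (drift m V B))
    (hf2 : ∃ (K : ℝ) (k : ℕ), ∀ x,
      ‖iteratedFDeriv ℝ 2 (drift m V B) x‖ ≤ K * (1 + ‖x‖) ^ k) :
    ∃ (C : EuclideanSpace ℝ (Fin (m + m)) → ℝ) (K : ℝ) (k : ℕ),
      (∀ x, |C x| ≤ K * (1 + ‖x‖) ^ k) ∧
      ∀ h : ℝ, 0 < h → h * L ≤ 1 / 2 →
      ∀ x : EuclideanSpace ℝ (Fin (m + m)),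
      ∀ (Ω : Type) (_ : MeasurableSpace Ω) (μ : Measure Ω), IsProbabilityMeasure μ →
      ∀ ξ η : Ω → EuclideanSpace ℝ (Fin d),
        IsCenteredGaussianVec μ d (h / 2) ξ →
        IsCenteredGaussianVec μ d (h / 2) η →
        IndepFun ξ η μ →
      ∀ Y₂ : Ω → EuclideanSpace ℝ (Fin (m + m)), Measurable Y₂ →
        (∀ᵐ ω ∂μ,
          Y₂ ω = (x + pad m (Matrix.toEuclideanLin Sig (ξ ω)))
            + h • (Matrix.toEuclideanLin
                (B ((2 : ℝ)⁻¹ • ((x + pad m (Matrix.toEuclideanLin Sig (ξ ω))) + Y₂ ω))))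
              (∫ θ in (0 : ℝ)..1, gradient (Ham m V)
                ((x + pad m (Matrix.toEuclideanLin Sig (ξ ω)))
                  + θ • (Y₂ ω - (x + pad m (Matrix.toEuclideanLin Sig (ξ ω))))))) →
        Real.sqrt (∫ ω,
            ‖(Y₂ ω + pad m (Matrix.toEuclideanLin Sig (η ω)))
                - x - h • drift m V B x
                - pad m (Matrix.toEuclideanLin Sig (ξ ω + η ω))
                - h • (fderiv ℝ (drift m V B) x) (pad m (Matrix.toEuclideanLin Sig (ξ ω)))‖ ^ 2 ∂μ)
          ≤ C x * h ^ 2 := by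
  obtain ⟨K, k, hK⟩ := hf2
  have hK0 : 0 ≤ K := nonneg_of_mul_nonneg_left ((norm_nonneg _).trans (hK 0)) (by positivity)
  -- `hLip` and `h * L ≤ 1 / 2` both survive replacing `L` by `max L 0`
  have hA u v u' v' := le_toNNReal_mul_add_of_le_mul_sqrt (norm_nonneg _) (norm_nonneg _)
    (hLip u v u' v')
  set S := ‖(Matrix.toEuclideanLin Sig).toContinuousLinearMap‖
  set c := d * √(∫ x, x ^ 4 ∂gaussianReal 0 1) / 2
  refine ⟨fun x => √2 * (6 * L.toNNReal * ‖drift m V B x‖ + 6 * L.toNNReal ^ 2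
      + (K * (2 + ‖x‖) ^ k + 7 * L.toNNReal) * (S ^ 2 * c)), _, k + 1,
    abs_remainder_coefficient_le (A := fun u => (Matrix.toEuclideanLin (B u)).toContinuousLinearMap)
      hA hK0 (by positivity) k,
    fun h hh hhL x Ω _ μ _ ξ η hξ _ _ Y₂ _ hY₂ =>
      sqrt_integral_norm_sq_drift_preserving_remainder_le hV hA hf hK hK0 hh.le
        (mul_toNNReal_le hh.le (by norm_num) hhL) x hξ hY₂⟩

/-- **local mean-square expansion with order-two remainder.**
There is a function `C(x)` of at most polynomial growth such that for all `h` with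
`h·L ≤ 1/2`, the one-step map of the drift-preserving scheme started at `x` satisfies
`(E[‖X₁ − x − h f(x) − (Σ(ξ+η),0) − h Df(x)(Σξ,0)‖²])^{1/2} ≤ C(x) h²`. -/
theorem drift_preserving_one_step_mean_square_expansion
    (m d : ℕ) (hm : 0 < m) (hd : 0 < d)
    (Sig : Matrix (Fin m) (Fin d) ℝ)
    (B : EuclideanSpace ℝ (Fin (m + m)) → Matrix (Fin (m + m)) (Fin (m + m)) ℝ)
    (V : EuclideanSpace ℝ (Fin m) → ℝ) (hV : ContDiff ℝ 1 V)
    (L : ℝ)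
    (hLip : ∀ x y x' y' : EuclideanSpace ℝ (Fin (m + m)),
      ‖Matrix.toEuclideanLin (B x) (gradient (Ham m V) y)
          - Matrix.toEuclideanLin (B x') (gradient (Ham m V) y')‖
        ≤ L * Real.sqrt (‖x - x'‖ ^ 2 + ‖y - y'‖ ^ 2))
    (hf : ContDiff ℝ 2 (drift m V B))
    (hf1 : ∃ (K : ℝ) (k : ℕ), ∀ x,
      ‖iteratedFDeriv ℝ 1 (drift m V B) x‖ ≤ K * (1 + ‖x‖) ^ k)
    (hf2 : ∃ (K : ℝ) (k : ℕ), ∀ x,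
      ‖iteratedFDeriv ℝ 2 (drift m V B) x‖ ≤ K * (1 + ‖x‖) ^ k) :
    ∃ (C : EuclideanSpace ℝ (Fin (m + m)) → ℝ) (K : ℝ) (k : ℕ),
      (∀ x, |C x| ≤ K * (1 + ‖x‖) ^ k) ∧
      ∀ h : ℝ, 0 < h → h * L ≤ 1 / 2 →
      ∀ x : EuclideanSpace ℝ (Fin (m + m)),
      ∀ (Ω : Type) (_ : MeasurableSpace Ω) (μ : Measure Ω), IsProbabilityMeasure μ →
      ∀ ξ η : Ω → EuclideanSpace ℝ (Fin d),
        IsCenteredGaussianVec μ d (h / 2) ξ →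
        IsCenteredGaussianVec μ d (h / 2) η →
        IndepFun ξ η μ →
      ∀ Y₂ : Ω → EuclideanSpace ℝ (Fin (m + m)), Measurable Y₂ →
        (∀ᵐ ω ∂μ,
          Y₂ ω = (x + pad m (Matrix.toEuclideanLin Sig (ξ ω)))
            + h • (Matrix.toEuclideanLin
                (B ((2 : ℝ)⁻¹ • ((x + pad m (Matrix.toEuclideanLin Sig (ξ ω))) + Y₂ ω))))
              (∫ θ in (0 : ℝ)..1, gradient (Ham m V)
                ((x + pad m (Matrix.toEuclideanLin Sig (ξ ω)))
                  + θ • (Y₂ ω - (x + pad m (Matrix.toEuclideanLin Sig (ξ ω))))))) →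
        Real.sqrt (∫ ω,
            ‖(Y₂ ω + pad m (Matrix.toEuclideanLin Sig (η ω)))
                - x - h • drift m V B x
                - pad m (Matrix.toEuclideanLin Sig (ξ ω + η ω))
                - h • (fderiv ℝ (drift m V B) x) (pad m (Matrix.toEuclideanLin Sig (ξ ω)))‖ ^ 2 ∂μ)
          ≤ C x * h ^ 2 :=
  drift_preserving_one_step_mean_square_expansion_general m d Sig B V hV L hLip hf hf2
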